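/- Let s ∈ ℝ and ε > 0. Then there exists a constant C > 0 (depending only on s and ε) such that for all sequences a, b : ℤ → ℂ, the sequence III(k) := Σ_{k'∈ℤ, k'≠0, |k|/2 ≤ |k'| < 2|k|} (⟨k⟩^s − ⟨k'⟩^s) · (i k') · a(k−k') · b(k') satisfies ‖III‖_{ℓ²} ≤ C ‖a‖_{ℓ²_{3/2+ε}} ‖b‖_{ℓ²_s}. -/

import Mathlib

open scoped ENNReal

/-- Japanese bracket `⟨k⟩ = (1 + k²)^(1/2)` for an integer `k`. -/
noncomputable def jb (k : ℤ) : ℝ := Real.sqrt (1 + (k : ℝ) ^ 2)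

lemma jb_one_le (k : ℤ) : 1 ≤ jb k := by
  have h1 := Real.sq_sqrt (show (0:ℝ) ≤ 1 + (k:ℝ)^2 by positivity)
  have h2 := Real.sqrt_nonneg (1 + (k:ℝ)^2)
  rw [jb]; nlinarith [sq_nonneg ((k:ℝ)), sq_nonneg (Real.sqrt (1 + (k:ℝ)^2) - 1)]

lemma jb_pos (k : ℤ) : 0 < jb k := lt_of_lt_of_le one_pos (jb_one_le k)

lemma abs_le_jb (k : ℤ) : |(k : ℝ)| ≤ jb k := by
  rw [jb, ← Real.sqrt_sq_eq_abs]
  exact Real.sqrt_le_sqrt (by nlinarith)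

lemma jb_le_two_mul {k k' : ℤ} (h : |k| ≤ 2 * |k'|) : jb k ≤ 2 * jb k' := by
  have h' : |(k:ℝ)| ≤ 2 * |(k':ℝ)| := by exact_mod_cast h
  rw [jb, jb, show (2:ℝ) * Real.sqrt (1 + (k':ℝ)^2) = Real.sqrt (4 * (1 + (k':ℝ)^2)) by
    rw [Real.sqrt_mul (by norm_num), show Real.sqrt 4 = 2 by
      rw [show (4:ℝ) = 2^2 by norm_num, Real.sqrt_sq (by norm_num)]]]
  apply Real.sqrt_le_sqrt
  have := abs_nonneg (k:ℝ)
  nlinarith [sq_abs (k:ℝ), sq_abs (k':ℝ), sq_nonneg (|(k:ℝ)| - 2*|(k':ℝ)|)]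

lemma rpow_comp {x y : ℝ} (r : ℝ) (hx : 0 < x) (hy : 0 < y) (h1 : x ≤ 2 * y)
    (h2 : y ≤ 2 * x) : x ^ r ≤ 2 ^ |r| * y ^ r := by
  rcases le_or_gt 0 r with hr | hr
  · calc x ^ r ≤ (2 * y) ^ r := Real.rpow_le_rpow hx.le h1 hr
    _ = 2 ^ r * y ^ r := Real.mul_rpow (by norm_num) hy.le
    _ ≤ 2 ^ |r| * y ^ r :=
        mul_le_mul_of_nonneg_right
          (Real.rpow_le_rpow_of_exponent_le one_le_two (le_abs_self r))
          (Real.rpow_nonneg hy.le r)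
  · have h3 : y / 2 ≤ x := by linarith
    calc x ^ r ≤ (y / 2) ^ r := Real.rpow_le_rpow_of_nonpos (by positivity) h3 hr.le
    _ = y ^ r / 2 ^ r := Real.div_rpow hy.le (by norm_num) r
    _ = 2 ^ (-r) * y ^ r := by
        rw [Real.rpow_neg (by norm_num)]; ring
    _ = 2 ^ |r| * y ^ r := by rw [abs_of_neg hr]

lemma jb_rpow (k : ℤ) (s : ℝ) : jb k ^ s = (1 + (k : ℝ) ^ 2) ^ (s / 2) := by
  rw [jb, Real.sqrt_eq_rpow, ← Real.rpow_mul (by positivity), show 1 / 2 * s = s / 2 by ring]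

lemma jb_mono {k m : ℤ} (h : |k| ≤ |m|) : jb k ≤ jb m := by
  have h' : |(k : ℝ)| ≤ |(m : ℝ)| := by exact_mod_cast h
  apply Real.sqrt_le_sqrt
  nlinarith [sq_abs (k : ℝ), sq_abs (m : ℝ), abs_nonneg (k : ℝ)]

lemma sqrt_two_mul_jb (x : ℝ) (k' : ℤ) (h : x ≤ 4 * (1 + (k' : ℝ) ^ 2)) :
    Real.sqrt x ≤ 2 * jb k' := by
  rw [jb, show (2:ℝ) * Real.sqrt (1 + (k':ℝ)^2) = Real.sqrt (4 * (1 + (k':ℝ)^2)) by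
    rw [Real.sqrt_mul (by norm_num), show Real.sqrt 4 = 2 by
      rw [show (4:ℝ) = 2^2 by norm_num, Real.sqrt_sq (by norm_num)]]]
  exact Real.sqrt_le_sqrt h

lemma jb_le_two_sqrt (x : ℝ) (k' : ℤ) (h : 1 + (k' : ℝ) ^ 2 ≤ 4 * x) :
    jb k' ≤ 2 * Real.sqrt x := by
  rw [jb, show (2:ℝ) * Real.sqrt x = Real.sqrt (4 * x) by
    rw [Real.sqrt_mul (by norm_num), show Real.sqrt 4 = 2 by
      rw [show (4:ℝ) = 2^2 by norm_num, Real.sqrt_sq (by norm_num)]]]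
  exact Real.sqrt_le_sqrt h


lemma seg_arith1 {t c : ℝ} (hu : |t| ≤ 2 * c) : 1 + t ^ 2 ≤ 4 * (1 + c ^ 2) := by
  nlinarith [sq_abs t, mul_self_le_mul_self (abs_nonneg t) hu]

lemma seg_arith2 {t c : ℝ} (hc : 0 ≤ c) (hl : c / 2 ≤ |t|) : 1 + c ^ 2 ≤ 4 * (1 + t ^ 2) := by
  nlinarith [sq_abs t, mul_self_le_mul_self hc (by linarith : c ≤ 2 * |t|)]

lemma key (s : ℝ) : ∀ k k' : ℤ, k' ≠ 0 → |k| ≤ 2 * |k'| → |k'| < 2 * |k| →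
    |jb k ^ s - jb k' ^ s| * |(k' : ℝ)| ≤
      (|s| * 2 ^ |s - 1| + 2 ^ |s| + 1) * (jb (k - k') * jb k' ^ s) := by
  intro k k' hk'0 h1 h2
  have hjk := jb_pos k
  have hjk' := jb_pos k'
  have hd := jb_pos (k - k')
  have hks : (0:ℝ) < jb k' ^ s := Real.rpow_pos_of_pos hjk' s
  have hcomp1 : jb k ≤ 2 * jb k' := jb_le_two_mul h1
  have hcomp2 : jb k' ≤ 2 * jb k := jb_le_two_mul h2.le
  have habs : |(k' : ℝ)| ≤ jb k' := abs_le_jb k'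
  have habs' : (0:ℝ) ≤ |(k' : ℝ)| := abs_nonneg _
  have hpow : jb k ^ s ≤ 2 ^ |s| * jb k' ^ s := rpow_comp s hjk hjk' hcomp1 hcomp2
  have h2s1 : (0:ℝ) < 2 ^ |s - 1| := Real.rpow_pos_of_pos (by norm_num) _
  have h2s : (0:ℝ) < 2 ^ |s| := Real.rpow_pos_of_pos (by norm_num) _
  rcases lt_or_ge ((k : ℝ) * (k' : ℝ)) 0 with hsign | hsign
  · -- opposite signs: |k - k'| ≥ |k'|
    have hsZ : k * k' < 0 := by exact_mod_cast hsign
    have hkk' : |k'| ≤ |k - k'| := by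
      rcases lt_trichotomy k 0 with hk | hk | hk <;> rcases lt_trichotomy k' 0 with hk2 | hk2 | hk2
      · nlinarith
      · simp [hk2]
      · rw [abs_of_pos hk2, abs_of_neg (by omega : k - k' < 0)]; omega
      · nlinarith
      · nlinarith
      · nlinarith
      · rw [abs_of_neg hk2, abs_of_pos (by omega : 0 < k - k')]; omega
      · simp [hk2]
      · nlinarith
    have hjd : jb k' ≤ jb (k - k') := jb_mono hkk'
    have htri : |jb k ^ s - jb k' ^ s| ≤ (2 ^ |s| + 1) * jb k' ^ s := by
      rw [abs_sub_le_iff]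
      constructor <;> nlinarith [Real.rpow_pos_of_pos hjk s]
    calc |jb k ^ s - jb k' ^ s| * |(k' : ℝ)| ≤ ((2 ^ |s| + 1) * jb k' ^ s) * jb k' := by
          apply mul_le_mul htri (habs.trans (le_refl _)) habs'
          positivity
    _ ≤ ((2 ^ |s| + 1) * jb k' ^ s) * jb (k - k') :=
          mul_le_mul_of_nonneg_left hjd (by positivity)
    _ ≤ (|s| * 2 ^ |s - 1| + 2 ^ |s| + 1) * (jb (k - k') * jb k' ^ s) := by
          have h2s' : (0:ℝ) ≤ |s| * 2 ^ |s - 1| := by positivity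
          nlinarith [mul_pos hd hks]
  · -- same sign: mean value theorem
    set M : ℝ := |s| * (2 ^ |s - 1| * jb k' ^ (s - 1)) with hM
    have hM0 : 0 ≤ M := by
      have := Real.rpow_pos_of_pos hjk' (s - 1)
      positivity
    have hk0 : k ≠ 0 := by
      rintro rfl
      rw [abs_zero, mul_zero] at h2
      exact (abs_nonneg k').not_gt h2
    have hr1 : |(k' : ℝ)| ≤ 2 * |(k : ℝ)| := by
      rw [← Int.cast_abs, ← Int.cast_abs]; exact_mod_cast h2.le
    have hr2 : |(k : ℝ)| ≤ 2 * |(k' : ℝ)| := by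
      rw [← Int.cast_abs, ← Int.cast_abs]; exact_mod_cast h1
    have hseg : ∀ t ∈ Set.uIcc ((k : ℝ)) ((k' : ℝ)),
        |(k' : ℝ)| / 2 ≤ |t| ∧ |t| ≤ 2 * |(k' : ℝ)| := by
      intro t ht
      rw [Set.uIcc_eq_union] at ht
      have hmin : min (k : ℝ) (k' : ℝ) ≤ t ∧ t ≤ max (k : ℝ) (k' : ℝ) := by
        rcases ht with ht | ht
        · exact ⟨le_trans (min_le_left _ _) ht.1, le_trans ht.2 (le_max_right _ _)⟩
        · exact ⟨le_trans (min_le_right _ _) ht.1, le_trans ht.2 (le_max_left _ _)⟩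
      have hk0' : (k : ℝ) ≠ 0 := by exact_mod_cast fun h => hk0 (by exact_mod_cast h)
      have hk'0' : (k' : ℝ) ≠ 0 := by exact_mod_cast fun h => hk'0 (by exact_mod_cast h)
      rcases lt_or_ge (0:ℝ) (k : ℝ) with hkp | hkp
      · have hk'p : (0:ℝ) < (k' : ℝ) := by
          rcases hk'0'.lt_or_gt with h | h
          · nlinarith
          · exact h
        have h1t : |(k':ℝ)| / 2 ≤ t := by
          rw [abs_of_pos hk'p]
          calc (k':ℝ)/2 ≤ min (k:ℝ) (k':ℝ) := by
                rcases min_cases (k:ℝ) (k':ℝ) with ⟨h, _⟩ | ⟨h, _⟩ <;> rw [h]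
                · rw [abs_of_pos hkp, abs_of_pos hk'p] at hr1; linarith
                · linarith
          _ ≤ t := hmin.1
        have ht0 : 0 < t := lt_of_lt_of_le (by positivity) h1t
        refine ⟨by rwa [abs_of_pos ht0], ?_⟩
        rw [abs_of_pos ht0, abs_of_pos hk'p]
        calc t ≤ max (k:ℝ) (k':ℝ) := hmin.2
        _ ≤ 2 * (k':ℝ) := by
            rcases max_cases (k:ℝ) (k':ℝ) with ⟨h, _⟩ | ⟨h, _⟩ <;> rw [h]
            · rw [abs_of_pos hkp, abs_of_pos hk'p] at hr2; linarith
            · linarith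
      · have hkn : (k:ℝ) < 0 := lt_of_le_of_ne hkp hk0'
        have hk'n : (k':ℝ) < 0 := by
          rcases hk'0'.lt_or_gt with h | h
          · exact h
          · nlinarith
        have h1t : t ≤ -(|(k':ℝ)| / 2) := by
          rw [abs_of_neg hk'n]
          calc t ≤ max (k:ℝ) (k':ℝ) := hmin.2
          _ ≤ -(-(k':ℝ)/2) := by
              rcases max_cases (k:ℝ) (k':ℝ) with ⟨h, _⟩ | ⟨h, _⟩ <;> rw [h]
              · rw [abs_of_neg hkn, abs_of_neg hk'n] at hr1; linarith
              · linarith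
        have habs2 : (0:ℝ) < |(k':ℝ)| / 2 := by
          have : (0:ℝ) < |(k':ℝ)| := abs_pos.mpr hk'0'
          linarith
        have ht0 : t < 0 := lt_of_le_of_lt h1t (by linarith)
        refine ⟨by rw [abs_of_neg ht0]; linarith, ?_⟩
        rw [abs_of_neg ht0, abs_of_neg hk'n]
        calc -t ≤ -min (k:ℝ) (k':ℝ) := by linarith [hmin.1]
        _ ≤ 2 * -(k':ℝ) := by
            rcases min_cases (k:ℝ) (k':ℝ) with ⟨h, _⟩ | ⟨h, _⟩ <;> rw [h]
            · rw [abs_of_neg hkn, abs_of_neg hk'n] at hr2; linarith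
            · linarith
    have hderiv : ∀ t ∈ Set.uIcc ((k : ℝ)) ((k' : ℝ)),
        HasDerivWithinAt (fun u : ℝ => (1 + u ^ 2) ^ (s / 2))
          (2 * t * (s / 2) * (1 + t ^ 2) ^ (s / 2 - 1))
          (Set.uIcc ((k : ℝ)) ((k' : ℝ))) t := by
      intro t _
      have h0 : HasDerivAt (fun t : ℝ => 1 + t ^ 2) (2 * t) t := by
        simpa using ((hasDerivAt_pow 2 t).const_add 1)
      have h3 := h0.rpow_const (p := s / 2) (Or.inl (by positivity))
      exact h3.hasDerivWithinAt
    have hbound : ∀ t ∈ Set.uIcc ((k : ℝ)) ((k' : ℝ)),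
        ‖2 * t * (s / 2) * (1 + t ^ 2) ^ (s / 2 - 1)‖ ≤ M := by
      intro t ht
      obtain ⟨hl, hu⟩ := hseg t ht
      set w : ℝ := Real.sqrt (1 + t ^ 2) with hw'
      have hw : (0:ℝ) < w := Real.sqrt_pos.mpr (by positivity)
      have hw1 : |t| ≤ w := by
        rw [hw', ← Real.sqrt_sq_eq_abs]; exact Real.sqrt_le_sqrt (by linarith [sq_nonneg t])
      have harith1 : 1 + t ^ 2 ≤ 4 * (1 + (k' : ℝ) ^ 2) := by
        have := seg_arith1 (c := |(k':ℝ)|) hu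
        rwa [sq_abs] at this
      have harith2 : 1 + (k' : ℝ) ^ 2 ≤ 4 * (1 + t ^ 2) := by
        have := seg_arith2 (c := |(k':ℝ)|) (abs_nonneg _) hl
        rwa [sq_abs] at this
      have hwu : w ≤ 2 * jb k' := sqrt_two_mul_jb (1 + t ^ 2) k' harith1
      have hwl : jb k' ≤ 2 * w := jb_le_two_sqrt (1 + t ^ 2) k' harith2
      have hcmp : w ^ (s - 1) ≤ 2 ^ |s - 1| * jb k' ^ (s - 1) :=
        rpow_comp (s - 1) hw hjk' hwu hwl
      have hXnn : (0:ℝ) ≤ (1 + t ^ 2) ^ (s / 2 - 1) := Real.rpow_nonneg (by positivity) _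
      have hsplit : (1 + t ^ 2) ^ (s / 2 - 1) = w ^ (s - 2) := by
        rw [hw', Real.sqrt_eq_rpow, ← Real.rpow_mul (by positivity),
          show 1 / 2 * (s - 2) = s / 2 - 1 by ring]
      have hmul : |t| * w ^ (s - 2) ≤ w ^ (s - 1) := by
        calc |t| * w ^ (s - 2) ≤ w * w ^ (s - 2) :=
              mul_le_mul_of_nonneg_right hw1 (Real.rpow_nonneg hw.le _)
        _ = w ^ (1:ℝ) * w ^ (s - 2) := by rw [Real.rpow_one]
        _ = w ^ (1 + (s - 2)) := (Real.rpow_add hw 1 (s - 2)).symm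
        _ = w ^ (s - 1) := by ring_nf
      calc ‖2 * t * (s / 2) * (1 + t ^ 2) ^ (s / 2 - 1)‖
          = |s| * (|t| * (1 + t ^ 2) ^ (s / 2 - 1)) := by
            rw [Real.norm_eq_abs, abs_mul, abs_mul, abs_mul, abs_two, abs_div, abs_two,
              abs_of_nonneg hXnn]; ring
      _ = |s| * (|t| * w ^ (s - 2)) := by rw [hsplit]
      _ ≤ |s| * w ^ (s - 1) := mul_le_mul_of_nonneg_left hmul (abs_nonneg s)
      _ ≤ |s| * (2 ^ |s - 1| * jb k' ^ (s - 1)) :=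
            mul_le_mul_of_nonneg_left hcmp (abs_nonneg s)
      _ = M := hM.symm
    have hmvt := Convex.norm_image_sub_le_of_norm_hasDerivWithin_le hderiv hbound
      (convex_uIcc _ _) (Set.right_mem_uIcc) (Set.left_mem_uIcc)
    rw [Real.norm_eq_abs, Real.norm_eq_abs] at hmvt
    have hfk : (1 + ((k:ℤ) : ℝ) ^ 2) ^ (s / 2) = jb k ^ s := (jb_rpow k s).symm
    have hfk' : (1 + ((k':ℤ) : ℝ) ^ 2) ^ (s / 2) = jb k' ^ s := (jb_rpow k' s).symm
    have hdist : |(k : ℝ) - (k' : ℝ)| ≤ jb (k - k') := by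
      have := abs_le_jb (k - k')
      push_cast at this
      exact this
    have hstep : |jb k ^ s - jb k' ^ s| ≤ M * jb (k - k') := by
      rw [← hfk, ← hfk']
      exact hmvt.trans (mul_le_mul_of_nonneg_left hdist hM0)
    have hrec : jb k' ^ (s - 1) * jb k' = jb k' ^ s := by
      calc jb k' ^ (s - 1) * jb k' = jb k' ^ (s - 1) * jb k' ^ (1:ℝ) := by rw [Real.rpow_one]
      _ = jb k' ^ (s - 1 + 1) := (Real.rpow_add hjk' _ _).symm
      _ = jb k' ^ s := by ring_nf
    calc |jb k ^ s - jb k' ^ s| * |(k' : ℝ)| ≤ (M * jb (k - k')) * jb k' :=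
          mul_le_mul hstep habs habs' (by positivity)
    _ = |s| * 2 ^ |s - 1| * (jb (k - k') * (jb k' ^ (s - 1) * jb k')) := by rw [hM]; ring
    _ = |s| * 2 ^ |s - 1| * (jb (k - k') * jb k' ^ s) := by rw [hrec]
    _ ≤ (|s| * 2 ^ |s - 1| + 2 ^ |s| + 1) * (jb (k - k') * jb k' ^ s) := by
          nlinarith [mul_pos hd hks]

lemma tsum_CS {ι : Type*} (f g : ι → ℝ≥0∞) :
    ∑' i, f i * g i ≤ (∑' i, f i ^ (2:ℝ)) ^ (1/2:ℝ) * (∑' i, g i ^ (2:ℝ)) ^ (1/2:ℝ) := by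
  rw [ENNReal.tsum_eq_iSup_sum]
  refine iSup_le fun sfin => ?_
  calc ∑ i ∈ sfin, f i * g i
      ≤ (∑ i ∈ sfin, f i ^ (2:ℝ)) ^ (1/2:ℝ) * (∑ i ∈ sfin, g i ^ (2:ℝ)) ^ (1/2:ℝ) :=
        ENNReal.inner_le_Lp_mul_Lq sfin f g ⟨by norm_num, by norm_num, by norm_num⟩
    _ ≤ (∑' i, f i ^ (2:ℝ)) ^ (1/2:ℝ) * (∑' i, g i ^ (2:ℝ)) ^ (1/2:ℝ) :=
        mul_le_mul' (ENNReal.rpow_le_rpow (ENNReal.sum_le_tsum _) (by norm_num))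
          (ENNReal.rpow_le_rpow (ENNReal.sum_le_tsum _) (by norm_num))

lemma half_sq (x : ℝ≥0∞) : (x ^ (1/2:ℝ)) ^ (2:ℝ) = x := by
  rw [← ENNReal.rpow_mul]; norm_num

lemma sq_half (x : ℝ≥0∞) : (x ^ (2:ℝ)) ^ (1/2:ℝ) = x := by
  rw [← ENNReal.rpow_mul]; norm_num

lemma self_mul_self (x : ℝ≥0∞) : x * x = x ^ (2:ℝ) := by
  rw [show ((2:ℝ)) = ((2:ℕ):ℝ) by norm_num, ENNReal.rpow_natCast, pow_two]

lemma conv_bound (A B : ℤ → ℝ≥0∞) :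
    (∑' k : ℤ, (∑' m : ℤ, A (k - m) * B m) ^ (2:ℝ)) ^ (1/2:ℝ)
      ≤ (∑' m : ℤ, A m) * (∑' m : ℤ, B m ^ (2:ℝ)) ^ (1/2:ℝ) := by
  have htrans : ∀ k : ℤ, ∑' m : ℤ, A (k - m) = ∑' m : ℤ, A m := fun k =>
    (Equiv.subLeft k).tsum_eq A
  have hinner : ∀ k : ℤ,
      ∑' m : ℤ, A (k - m) * B m ≤
        (∑' m : ℤ, A m) ^ (1/2:ℝ) * (∑' m : ℤ, A (k - m) * B m ^ (2:ℝ)) ^ (1/2:ℝ) := by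
    intro k
    have e1 : ∀ m : ℤ, A (k - m) * B m
        = (A (k - m)) ^ (1/2:ℝ) * ((A (k - m)) ^ (1/2:ℝ) * B m) := by
      intro m
      rw [← mul_assoc, ← ENNReal.rpow_add_of_nonneg (1/2) (1/2) (by norm_num) (by norm_num)]
      norm_num
    have e3 : ∀ m : ℤ, ((A (k - m)) ^ (1/2:ℝ) * B m) ^ (2:ℝ)
        = A (k - m) * B m ^ (2:ℝ) := by
      intro m
      rw [ENNReal.mul_rpow_of_nonneg _ _ (by norm_num), half_sq]
    calc ∑' m : ℤ, A (k - m) * B m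
        = ∑' m : ℤ, (A (k - m)) ^ (1/2:ℝ) * ((A (k - m)) ^ (1/2:ℝ) * B m) :=
          tsum_congr e1
      _ ≤ (∑' m : ℤ, ((A (k - m)) ^ (1/2:ℝ)) ^ (2:ℝ)) ^ (1/2:ℝ) *
            (∑' m : ℤ, ((A (k - m)) ^ (1/2:ℝ) * B m) ^ (2:ℝ)) ^ (1/2:ℝ) := tsum_CS _ _
      _ = (∑' m : ℤ, A m) ^ (1/2:ℝ) * (∑' m : ℤ, A (k - m) * B m ^ (2:ℝ)) ^ (1/2:ℝ) := by
          rw [tsum_congr (fun m => half_sq (A (k - m))), htrans k, tsum_congr e3]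
  have hsq : ∀ k : ℤ,
      (∑' m : ℤ, A (k - m) * B m) ^ (2:ℝ) ≤
        (∑' m : ℤ, A m) * (∑' m : ℤ, A (k - m) * B m ^ (2:ℝ)) := by
    intro k
    calc (∑' m : ℤ, A (k - m) * B m) ^ (2:ℝ)
        ≤ ((∑' m : ℤ, A m) ^ (1/2:ℝ) * (∑' m : ℤ, A (k - m) * B m ^ (2:ℝ)) ^ (1/2:ℝ)) ^ (2:ℝ) :=
          ENNReal.rpow_le_rpow (hinner k) (by norm_num)
      _ = (∑' m : ℤ, A m) * (∑' m : ℤ, A (k - m) * B m ^ (2:ℝ)) := by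
          rw [ENNReal.mul_rpow_of_nonneg _ _ (by norm_num), half_sq, half_sq]
  have hdouble : ∑' k : ℤ, ∑' m : ℤ, A (k - m) * B m ^ (2:ℝ)
      = (∑' m : ℤ, A m) * (∑' m : ℤ, B m ^ (2:ℝ)) := by
    rw [ENNReal.tsum_comm]
    calc ∑' m : ℤ, ∑' k : ℤ, A (k - m) * B m ^ (2:ℝ)
        = ∑' m : ℤ, B m ^ (2:ℝ) * ∑' k : ℤ, A (k - m) := by
          refine tsum_congr fun m => ?_
          rw [← ENNReal.tsum_mul_left]
          exact tsum_congr fun k => mul_comm _ _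
      _ = ∑' m : ℤ, B m ^ (2:ℝ) * ∑' n : ℤ, A n := by
          refine tsum_congr fun m => ?_
          congr 1
          exact (Equiv.subRight m).tsum_eq A
      _ = (∑' m : ℤ, A m) * (∑' m : ℤ, B m ^ (2:ℝ)) := by
          rw [ENNReal.tsum_mul_right, mul_comm]
  calc (∑' k : ℤ, (∑' m : ℤ, A (k - m) * B m) ^ (2:ℝ)) ^ (1/2:ℝ)
      ≤ (∑' k : ℤ, (∑' m : ℤ, A m) * (∑' m : ℤ, A (k - m) * B m ^ (2:ℝ))) ^ (1/2:ℝ) :=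
        ENNReal.rpow_le_rpow (ENNReal.tsum_le_tsum hsq) (by norm_num)
    _ = ((∑' m : ℤ, A m) * ((∑' m : ℤ, A m) * (∑' m : ℤ, B m ^ (2:ℝ)))) ^ (1/2:ℝ) := by
        rw [ENNReal.tsum_mul_left, hdouble]
    _ = (∑' m : ℤ, A m) * (∑' m : ℤ, B m ^ (2:ℝ)) ^ (1/2:ℝ) := by
        rw [← mul_assoc]
        rw [self_mul_self, ENNReal.mul_rpow_of_nonneg _ _ (by norm_num), sq_half]

lemma enorm_tsum_le {ι : Type*} (F : ι → ℂ) :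
    (‖∑' i, F i‖₊ : ℝ≥0∞) ≤ ∑' i, (‖F i‖₊ : ℝ≥0∞) := by
  by_cases h : Summable fun i => ‖F i‖₊
  · rw [← ENNReal.coe_tsum h]
    exact_mod_cast nnnorm_tsum_le h
  · have htop : ∑' i, (‖F i‖₊ : ℝ≥0∞) = ⊤ := by
      by_contra hne
      exact h (ENNReal.tsum_coe_ne_top_iff_summable.mp hne)
    simp [htop]

lemma weight_summable {ε : ℝ} (hε : 0 < ε) :
    Summable fun m : ℤ => jb m ^ (-(1 + 2 * ε)) := by
  apply Summable.of_norm_bounded_eventually (g := fun m : ℤ => |(m : ℝ)| ^ (-(1 + 2 * ε)))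
    (Real.summable_abs_int_rpow (by linarith))
  rw [Filter.eventually_cofinite]
  apply Set.Finite.subset (Set.finite_singleton (0 : ℤ))
  intro m hm
  simp only [Set.mem_setOf_eq, not_le] at hm
  by_contra hm0
  simp only [Set.mem_singleton_iff] at hm0
  have h0 : (0:ℝ) < |(m:ℝ)| := by
    simp only [abs_pos]
    exact_mod_cast hm0
  have hb : jb m ^ (-(1 + 2 * ε)) ≤ |(m:ℝ)| ^ (-(1 + 2 * ε)) :=
    Real.rpow_le_rpow_of_nonpos h0 (abs_le_jb m) (by linarith)
  have hnn : (0:ℝ) ≤ jb m ^ (-(1 + 2 * ε)) := Real.rpow_nonneg (jb_pos m).le _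
  rw [Real.norm_eq_abs, abs_of_nonneg hnn] at hm
  exact absurd hb (not_le.mpr hm)

lemma jb_sq (m : ℤ) (t : ℝ) : (jb m ^ t) ^ 2 = jb m ^ (2 * t) := by
  rw [← Real.rpow_natCast (jb m ^ t) 2, ← Real.rpow_mul (jb_pos m).le]
  norm_num [mul_comm]

lemma term_norm (x : ℝ) (m : ℤ) (z w : ℂ) :
    ‖(x : ℂ) * (Complex.I * (m : ℂ)) * z * w‖ = |x| * |(m : ℝ)| * ‖z‖ * ‖w‖ := by
  simp [norm_mul, Complex.norm_real, Complex.norm_I]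

lemma ofReal_sq_rpow {x : ℝ} (hx : 0 ≤ x) :
    (ENNReal.ofReal x) ^ (2:ℝ) = ENNReal.ofReal (x ^ 2) := by
  rw [show ((2:ℝ)) = ((2:ℕ):ℝ) by norm_num, ENNReal.rpow_natCast,
    ← ENNReal.ofReal_pow hx]

/-- Weighted `ℓ²_s` norm of a sequence `a : ℤ → ℂ`, valued in `[0,∞]`. -/
noncomputable def l2 (s : ℝ) (a : ℤ → ℂ) : ℝ≥0∞ :=
  (∑' k : ℤ, ENNReal.ofReal (jb k ^ (2 * s) * ‖a k‖ ^ 2)) ^ (1 / 2 : ℝ)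

/-- Comparable-frequency piece (region `|k|/2 ≤ |k'| < 2|k|`) of the commutator, `s ∈ ℝ`:
`‖III‖_{ℓ²} ≤ C ‖a‖_{ℓ²_{3/2+ε}} ‖b‖_{ℓ²_s}`. -/
theorem commutator_comparable_piece (s ε : ℝ) (hε : 0 < ε) :
    ∃ C : ℝ, 0 < C ∧ ∀ a b : ℤ → ℂ,
      l2 0 (fun k => ∑' k' : {m : ℤ // m ≠ 0 ∧ |k| ≤ 2 * |m| ∧ |m| < 2 * |k|},
          Complex.ofReal (jb k ^ s - jb k'.1 ^ s) * (Complex.I * (k'.1 : ℂ)) *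
            a (k - k'.1) * b k'.1)
        ≤ ENNReal.ofReal C * (l2 (3 / 2 + ε) a * l2 s b) := by
  have hC₁ : (0:ℝ) < |s| * 2 ^ |s - 1| + 2 ^ |s| + 1 := by positivity
  set C₁ : ℝ := |s| * 2 ^ |s - 1| + 2 ^ |s| + 1 with hC₁def
  have hCwsum : ∑' m : ℤ, ENNReal.ofReal (jb m ^ (-(1 + 2 * ε)))
      = ENNReal.ofReal (∑' m : ℤ, jb m ^ (-(1 + 2 * ε))) :=
    (ENNReal.ofReal_tsum_of_nonneg (fun m => Real.rpow_nonneg (jb_pos m).le _)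
      (weight_summable hε)).symm
  set Cw : ℝ≥0∞ := (∑' m : ℤ, ENNReal.ofReal (jb m ^ (-(1 + 2 * ε)))) ^ (1/2:ℝ) with hCwdef
  have hCw : Cw ≠ ⊤ := by
    rw [hCwdef, hCwsum]
    exact ENNReal.rpow_ne_top_of_nonneg (by norm_num) ENNReal.ofReal_ne_top
  set K : ℝ≥0∞ := ENNReal.ofReal C₁ * Cw with hKdef
  have hK : K ≠ ⊤ := ENNReal.mul_ne_top ENNReal.ofReal_ne_top hCw
  have hKtoReal : (0:ℝ) ≤ K.toReal := ENNReal.toReal_nonneg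
  refine ⟨K.toReal + 1, by positivity, fun a b => ?_⟩
  have hKle : K ≤ ENNReal.ofReal (K.toReal + 1) := by
    calc K = ENNReal.ofReal K.toReal := (ENNReal.ofReal_toReal hK).symm
    _ ≤ _ := ENNReal.ofReal_le_ofReal (by linarith)
  -- abbreviations
  set A : ℤ → ℝ≥0∞ := fun m => ENNReal.ofReal (jb m * ‖a m‖) with hAdef
  set B : ℤ → ℝ≥0∞ := fun m => ENNReal.ofReal (jb m ^ s * ‖b m‖) with hBdef
  set III : ℤ → ℂ := fun k => ∑' k' : {m : ℤ // m ≠ 0 ∧ |k| ≤ 2 * |m| ∧ |m| < 2 * |k|},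
      Complex.ofReal (jb k ^ s - jb k'.1 ^ s) * (Complex.I * (k'.1 : ℂ)) *
        a (k - k'.1) * b k'.1 with hIIIdef
  -- pointwise bound
  have hpt : ∀ k : ℤ, ENNReal.ofReal ‖III k‖ ≤
      ENNReal.ofReal C₁ * ∑' m : ℤ, A (k - m) * B m := by
    intro k
    set S : Set ℤ := {m : ℤ | m ≠ 0 ∧ |k| ≤ 2 * |m| ∧ |m| < 2 * |k|} with hSdef
    set h : ℤ → ℂ := fun m => Complex.ofReal (jb k ^ s - jb m ^ s) * (Complex.I * (m : ℂ)) *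
        a (k - m) * b m with hhdef
    have h1 : ENNReal.ofReal ‖III k‖ ≤ ∑' (m : S), (‖h ↑m‖₊ : ℝ≥0∞) := by
      rw [ofReal_norm, hIIIdef]
      exact enorm_tsum_le _
    have h2 : ∑' (m : S), (‖h ↑m‖₊ : ℝ≥0∞)
        = ∑' m : ℤ, S.indicator (fun m => (‖h m‖₊ : ℝ≥0∞)) m :=
        tsum_subtype S (fun m => (‖h m‖₊ : ℝ≥0∞))
    have h3 : ∀ m : ℤ, S.indicator (fun m => (‖h m‖₊ : ℝ≥0∞)) m
        ≤ ENNReal.ofReal C₁ * (A (k - m) * B m) := by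
      intro m
      by_cases hm : m ∈ S
      · rw [Set.indicator_of_mem hm]
        obtain ⟨hm0, hm1, hm2⟩ := hm
        rw [← enorm_eq_nnnorm, ← ofReal_norm]
        have hnorm : ‖h m‖ = |jb k ^ s - jb m ^ s| * |(m:ℝ)| * ‖a (k - m)‖ * ‖b m‖ :=
          term_norm _ _ _ _
        have hkey := key s k m hm0 hm1 hm2
        have hreal : ‖h m‖ ≤ C₁ * ((jb (k - m) * ‖a (k - m)‖) * (jb m ^ s * ‖b m‖)) := by
          rw [hnorm]
          have step1 : |jb k ^ s - jb m ^ s| * |(m:ℝ)| * ‖a (k - m)‖ * ‖b m‖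
              ≤ (C₁ * (jb (k - m) * jb m ^ s)) * ‖a (k - m)‖ * ‖b m‖ := by
            apply mul_le_mul_of_nonneg_right _ (norm_nonneg _)
            exact mul_le_mul_of_nonneg_right hkey (norm_nonneg _)
          calc |jb k ^ s - jb m ^ s| * |(m:ℝ)| * ‖a (k - m)‖ * ‖b m‖
              ≤ (C₁ * (jb (k - m) * jb m ^ s)) * ‖a (k - m)‖ * ‖b m‖ := step1
          _ = C₁ * ((jb (k - m) * ‖a (k - m)‖) * (jb m ^ s * ‖b m‖)) := by ring
        calc ENNReal.ofReal ‖h m‖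
            ≤ ENNReal.ofReal (C₁ * ((jb (k - m) * ‖a (k - m)‖) * (jb m ^ s * ‖b m‖))) :=
              ENNReal.ofReal_le_ofReal hreal
        _ = ENNReal.ofReal C₁ * (A (k - m) * B m) := by
            rw [ENNReal.ofReal_mul hC₁.le,
              ENNReal.ofReal_mul (mul_nonneg (jb_pos _).le (norm_nonneg _))]
      · rw [Set.indicator_of_notMem hm]
        exact zero_le
    calc ENNReal.ofReal ‖III k‖ ≤ ∑' (m : S), (‖h ↑m‖₊ : ℝ≥0∞) := h1
    _ = ∑' m : ℤ, S.indicator (fun m => (‖h m‖₊ : ℝ≥0∞)) m := h2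
    _ ≤ ∑' m : ℤ, ENNReal.ofReal C₁ * (A (k - m) * B m) := ENNReal.tsum_le_tsum h3
    _ = ENNReal.ofReal C₁ * ∑' m : ℤ, A (k - m) * B m := ENNReal.tsum_mul_left
  -- l2 0 III in rpow form
  have hl2 : l2 0 III = (∑' k : ℤ, (ENNReal.ofReal ‖III k‖) ^ (2:ℝ)) ^ (1/2:ℝ) := by
    rw [l2]
    congr 1
    refine tsum_congr fun k => ?_
    rw [mul_zero, Real.rpow_zero, one_mul, ofReal_sq_rpow (norm_nonneg _)]
  -- B side
  have hB2 : ∀ m : ℤ, B m ^ (2:ℝ) = ENNReal.ofReal (jb m ^ (2*s) * ‖b m‖ ^ 2) := by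
    intro m
    rw [hBdef, ofReal_sq_rpow (mul_nonneg (Real.rpow_nonneg (jb_pos m).le s) (norm_nonneg _)), mul_pow, jb_sq]
  have hBl2 : (∑' m : ℤ, B m ^ (2:ℝ)) ^ (1/2:ℝ) = l2 s b := by
    rw [l2, tsum_congr hB2]
  -- A side
  have hA : ∀ m : ℤ, A m = ENNReal.ofReal (jb m ^ (-(1/2+ε)))
      * ENNReal.ofReal (jb m ^ (3/2+ε) * ‖a m‖) := by
    intro m
    rw [hAdef, ← ENNReal.ofReal_mul (Real.rpow_nonneg (jb_pos m).le _), ← mul_assoc,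
      ← Real.rpow_add (jb_pos m), show -(1/2+ε) + (3/2+ε) = (1:ℝ) by ring, Real.rpow_one]
  have hAsum : ∑' m : ℤ, A m ≤ Cw * l2 (3/2+ε) a := by
    calc ∑' m : ℤ, A m
        = ∑' m : ℤ, ENNReal.ofReal (jb m ^ (-(1/2+ε)))
            * ENNReal.ofReal (jb m ^ (3/2+ε) * ‖a m‖) := tsum_congr hA
    _ ≤ (∑' m : ℤ, (ENNReal.ofReal (jb m ^ (-(1/2+ε)))) ^ (2:ℝ)) ^ (1/2:ℝ)
          * (∑' m : ℤ, (ENNReal.ofReal (jb m ^ (3/2+ε) * ‖a m‖)) ^ (2:ℝ)) ^ (1/2:ℝ) :=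
        tsum_CS _ _
    _ = Cw * l2 (3/2+ε) a := by
        congr 1
        · rw [hCwdef]
          congr 1
          refine tsum_congr fun m => ?_
          rw [ofReal_sq_rpow (Real.rpow_nonneg (jb_pos m).le _), jb_sq,
            show 2 * -(1/2+ε) = -(1 + 2*ε) by ring]
        · rw [l2]
          congr 1
          refine tsum_congr fun m => ?_
          rw [ofReal_sq_rpow (mul_nonneg (Real.rpow_nonneg (jb_pos m).le _) (norm_nonneg _)), mul_pow, jb_sq]
  -- main chain
  calc l2 0 III = (∑' k : ℤ, (ENNReal.ofReal ‖III k‖) ^ (2:ℝ)) ^ (1/2:ℝ) := hl2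
  _ ≤ (∑' k : ℤ, (ENNReal.ofReal C₁ * ∑' m : ℤ, A (k - m) * B m) ^ (2:ℝ)) ^ (1/2:ℝ) := by
      apply ENNReal.rpow_le_rpow _ (by norm_num)
      exact ENNReal.tsum_le_tsum fun k => ENNReal.rpow_le_rpow (hpt k) (by norm_num)
  _ = ENNReal.ofReal C₁ * (∑' k : ℤ, (∑' m : ℤ, A (k - m) * B m) ^ (2:ℝ)) ^ (1/2:ℝ) := by
      rw [show (∑' k : ℤ, (ENNReal.ofReal C₁ * ∑' m : ℤ, A (k - m) * B m) ^ (2:ℝ))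
          = (ENNReal.ofReal C₁) ^ (2:ℝ) * ∑' k : ℤ, (∑' m : ℤ, A (k - m) * B m) ^ (2:ℝ) by
        rw [← ENNReal.tsum_mul_left]
        exact tsum_congr fun k => ENNReal.mul_rpow_of_nonneg _ _ (by norm_num)]
      rw [ENNReal.mul_rpow_of_nonneg _ _ (by norm_num), sq_half]
  _ ≤ ENNReal.ofReal C₁ * ((∑' m : ℤ, A m) * (∑' m : ℤ, B m ^ (2:ℝ)) ^ (1/2:ℝ)) :=
      mul_le_mul_right (conv_bound A B) _
  _ = ENNReal.ofReal C₁ * ((∑' m : ℤ, A m) * l2 s b) := by rw [hBl2]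
  _ ≤ ENNReal.ofReal C₁ * ((Cw * l2 (3/2+ε) a) * l2 s b) :=
      mul_le_mul_right (mul_le_mul_left hAsum _) _
  _ = K * (l2 (3/2+ε) a * l2 s b) := by rw [hKdef]; ring
  _ ≤ ENNReal.ofReal (K.toReal + 1) * (l2 (3/2+ε) a * l2 s b) := mul_le_mul_left hKle _
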